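/- arXiv:nlin/0302059 — 6 statements merged into one kernel-verified Lean document; each statement's English description precedes it below -/
import Mathlib

section
/- Let ζ₁,…,ζₙ be distinct complex numbers with positive imaginary parts, and let u₁,…,uₙ ∈ ℂ^m. Define the n×n Hermitian matrix D by D_{jk} = (i/(ζ_k - ζ_j*))·⟨u_j, u_k⟩. If the vectors u₁,…,uₙ are all nonzero, then for every nonzero y ∈ ℂⁿ, the quadratic form ∑_{j,k} D_{jk} y_j ȳ_k equals ∫₀^∞ ‖∑_j e^{-i ζ_j* z} y_j u_j‖² dz, and in particular D is positive definite provided the functions z ↦ e^{-i ζ_j* z} u_j are linearly independent on (0,∞). -/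
/-!
`D` is the Gram matrix of the functions `f_j z = exp (-i ζ̄_j z) • u_j` in `L²((0,∞), ℂ^m)`:
since `Im (ζ_k - ζ̄_j) > 0`, `∫₀^∞ exp (i (ζ_k - ζ̄_j) z) dz = i / (ζ_k - ζ̄_j)`, so expanding
`‖∑_j y_j f_j z‖²` and integrating term by term gives the quadratic form. That integrand is
continuous and nonnegative, and by linear independence it is nonzero at some `z > 0`, so the
integral is positive.
-/

open Complex Matrix BigOperators
open scoped ComplexOrder

noncomputable section

/-- Hermitian inner product on ℂ^m, linear in the first slot. -/
def herm {m : ℕ} (u v : Fin m → ℂ) : ℂ := ∑ a, u a * (starRingEnd ℂ) (v a)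

open MeasureTheory Set ComplexConjugate

theorem IsOpen.setIntegral_pos_of_continuous_nonneg {X : Type*} [TopologicalSpace X]
    [MeasurableSpace X] {μ : Measure X} [μ.IsOpenPosMeasure] {s : Set X} (hs : IsOpen s)
    {f : X → ℝ} (hf : Continuous f) (hfi : IntegrableOn f s μ) (hf₀ : 0 ≤ f) {x : X}
    (hxs : x ∈ s) (hfx : f x ≠ 0) : 0 < ∫ x in s, f x ∂μ := by
  rw [setIntegral_pos_iff_support_of_nonneg_ae (.of_forall hf₀) hfi]
  exact (hf.isOpen_support.inter hs).measure_pos μ ⟨x, hfx, hxs⟩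

theorem integrableOn_cexp_I_mul_Ioi {w : ℂ} (hw : 0 < w.im) :
    IntegrableOn (fun z : ℝ => cexp (I * w * z)) (Ioi 0) :=
  integrableOn_exp_mul_complex_Ioi (by simpa using hw) 0

theorem integral_cexp_I_mul_Ioi {w : ℂ} (hw : 0 < w.im) :
    ∫ z : ℝ in Ioi 0, cexp (I * w * z) = I / w := by
  have hw₀ : w ≠ 0 := fun h => by simp [h] at hw
  rw [integral_exp_mul_complex_Ioi (by simpa using hw) 0]
  field_simp
  simp

section herm

variable {m : ℕ}

theorem conj_herm (v w : Fin m → ℂ) : conj (herm v w) = herm w v := by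
  simp only [herm, map_sum, map_mul, conj_conj, mul_comm]

theorem herm_self (v : Fin m → ℂ) : herm v v = ∑ a, (‖v a‖ : ℂ) ^ 2 := by
  simp only [herm, mul_conj, normSq_eq_norm_sq, ofReal_pow]

theorem herm_sum_mul_sum {ι : Type*} [Fintype ι] (c d : ι → ℂ) (v w : ι → Fin m → ℂ) :
    herm (fun a => ∑ j, c j * v j a) (fun a => ∑ k, d k * w k a) =
      ∑ j, ∑ k, c j * conj (d k) * herm (v j) (w k) := by
  simp only [herm, map_sum, map_mul, Finset.sum_mul, Finset.mul_sum]
  conv_rhs => rw [Finset.sum_comm]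
  rw [Finset.sum_comm]
  refine Finset.sum_congr rfl fun k _ => ?_
  rw [Finset.sum_comm]
  exact Finset.sum_congr rfl fun j _ => Finset.sum_congr rfl fun a _ => by ring

end herm

theorem im_sub_conj_pos {ι : Type*} {ζ : ι → ℂ} (hζ : ∀ j, 0 < (ζ j).im) (j k : ι) :
    0 < (ζ k - conj (ζ j)).im := by
  simpa using add_pos (hζ k) (hζ j)

section gramMatrix

variable {ι : Type*} {m : ℕ}

def gramMatrix (ζ : ι → ℂ) (u : ι → Fin m → ℂ) : Matrix ι ι ℂ :=
  of fun j k => I / (ζ k - conj (ζ j)) * herm (u j) (u k)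

theorem gramMatrix_isHermitian (ζ : ι → ℂ) (u : ι → Fin m → ℂ) :
    (gramMatrix ζ u).IsHermitian := by
  ext j k
  rw [conjTranspose_apply, gramMatrix, of_apply, of_apply, star_def, map_mul, conj_herm,
    map_div₀, conj_I, map_sub, conj_conj, ← neg_sub, div_neg, neg_div, neg_neg]

variable [Fintype ι]

def expSum (ζ y : ι → ℂ) (u : ι → Fin m → ℂ) (z : ℝ) : Fin m → ℂ :=
  fun a => ∑ j, cexp (-I * conj (ζ j) * z) * y j * u j a

variable {ζ : ι → ℂ} (y : ι → ℂ) (u : ι → Fin m → ℂ)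

theorem herm_expSum_self (z : ℝ) :
    herm (expSum ζ y u z) (expSum ζ y u z) =
      ∑ j, ∑ k, cexp (I * (ζ k - conj (ζ j)) * z) * (y j * conj (y k) * herm (u j) (u k)) := by
  unfold expSum
  rw [herm_sum_mul_sum]
  refine Finset.sum_congr rfl fun j _ => Finset.sum_congr rfl fun k _ => ?_
  have hexp : cexp (-I * conj (ζ j) * z) * conj (cexp (-I * conj (ζ k) * z)) =
      cexp (I * (ζ k - conj (ζ j)) * z) := by
    rw [← exp_conj, ← exp_add]
    simp only [map_mul, map_neg, conj_I, conj_conj, conj_ofReal]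
    ring_nf
  rw [map_mul, ← hexp]
  ring

theorem integrableOn_herm_expSum_self (hζ : ∀ j, 0 < (ζ j).im) :
    IntegrableOn (fun z => herm (expSum ζ y u z) (expSum ζ y u z)) (Ioi 0) := by
  simp_rw [herm_expSum_self]
  exact integrable_finsetSum _ fun j _ => integrable_finsetSum _ fun k _ =>
    (integrableOn_cexp_I_mul_Ioi (im_sub_conj_pos hζ j k)).mul_const _

theorem integral_herm_expSum_self (hζ : ∀ j, 0 < (ζ j).im) :
    ∫ z in Ioi 0, herm (expSum ζ y u z) (expSum ζ y u z) =
      ∑ j, ∑ k, gramMatrix ζ u j k * y j * conj (y k) := by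
  simp_rw [herm_expSum_self]
  rw [integral_finsetSum _ fun j _ => integrable_finsetSum _ fun k _ =>
    (integrableOn_cexp_I_mul_Ioi (im_sub_conj_pos hζ j k)).mul_const _]
  refine Finset.sum_congr rfl fun j _ => ?_
  rw [integral_finsetSum _ fun k _ =>
    (integrableOn_cexp_I_mul_Ioi (im_sub_conj_pos hζ j k)).mul_const _]
  refine Finset.sum_congr rfl fun k _ => ?_
  rw [integral_mul_const, integral_cexp_I_mul_Ioi (im_sub_conj_pos hζ j k), gramMatrix, of_apply]
  ring

theorem integral_herm_expSum_self_pos (hζ : ∀ j, 0 < (ζ j).im) {z₀ : ℝ} (hz₀ : 0 < z₀)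
    (hne : expSum ζ y u z₀ ≠ 0) :
    0 < ∫ z in Ioi 0, herm (expSum ζ y u z) (expSum ζ y u z) := by
  set g : ℝ → ℝ := fun z => ∑ a, ‖expSum ζ y u z a‖ ^ 2
  have hg : ∀ z, herm (expSum ζ y u z) (expSum ζ y u z) = g z := fun z => by
    simp [g, herm_self]
  simp_rw [hg]
  rw [integral_complex_ofReal, zero_lt_real]
  refine isOpen_Ioi.setIntegral_pos_of_continuous_nonneg ?_ ?_ (fun z => by positivity) hz₀ ?_
  · unfold g expSum
    fun_prop
  · simpa [hg, IntegrableOn] using (integrableOn_herm_expSum_self y u hζ).re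
  · obtain ⟨a, ha⟩ := Function.ne_iff.1 hne
    exact (Finset.sum_pos' (fun a _ => by positivity)
      ⟨a, Finset.mem_univ a, pow_pos (norm_pos_iff.2 ha) 2⟩).ne'

theorem exists_expSum_ne_zero
    (hli : LinearIndependent ℂ (fun j => fun z : Ioi (0:ℝ) => fun a : Fin m =>
      cexp (-I * conj (ζ j) * ((z : ℝ) : ℂ)) * u j a)) {y : ι → ℂ} (hy : y ≠ 0) :
    ∃ z > 0, expSum ζ y u z ≠ 0 := by
  by_contra! h
  refine hy (funext <| Fintype.linearIndependent_iff.1 hli y ?_)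
  ext ⟨z, hz⟩ a
  simp only [Finset.sum_apply, Pi.smul_apply, smul_eq_mul, Pi.zero_apply]
  exact (Finset.sum_congr rfl fun j _ => by ring).trans (congrFun (h z hz) a)

theorem gramMatrix_posDef (hζ : ∀ j, 0 < (ζ j).im)
    (hli : LinearIndependent ℂ (fun j => fun z : Ioi (0:ℝ) => fun a : Fin m =>
      cexp (-I * conj (ζ j) * ((z : ℝ) : ℂ)) * u j a)) :
    (gramMatrix ζ u).PosDef := by
  refine .of_dotProduct_mulVec_pos (gramMatrix_isHermitian ζ u) fun x hx => ?_
  have hquad : star x ⬝ᵥ (gramMatrix ζ u *ᵥ x) =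
      ∑ j, ∑ k, gramMatrix ζ u j k * star x j * conj (star x k) := by
    simp only [dotProduct, mulVec, Finset.mul_sum, Pi.star_apply, star_def, conj_conj]
    exact Finset.sum_congr rfl fun j _ => Finset.sum_congr rfl fun k _ => by ring
  obtain ⟨z₀, hz₀, hne⟩ := exists_expSum_ne_zero u hli (star_ne_zero.2 hx)
  rw [hquad, ← integral_herm_expSum_self _ u hζ]
  exact integral_herm_expSum_self_pos _ u hζ hz₀ hne

end gramMatrix

theorem stmt2_general {m n : ℕ} (ζ : Fin n → ℂ)
    (him : ∀ j, 0 < (ζ j).im)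
    (u : Fin n → Fin m → ℂ)
    (D : Matrix (Fin n) (Fin n) ℂ)
    (hD : ∀ j k, D j k = Complex.I / (ζ k - (starRingEnd ℂ) (ζ j)) * herm (u j) (u k)) :
    (∀ y : Fin n → ℂ, y ≠ 0 →
      (∑ j, ∑ k, D j k * y j * (starRingEnd ℂ) (y k)) =
        ((∫ z in Set.Ioi (0:ℝ), ∑ a,
            (‖(∑ j, Complex.exp (-Complex.I * (starRingEnd ℂ) (ζ j) * (z:ℂ)) *
              y j * u j a)‖)^2) : ℂ)) ∧
    (LinearIndependent ℂ (fun j => fun z : Set.Ioi (0:ℝ) => fun a : Fin m =>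
        Complex.exp (-Complex.I * (starRingEnd ℂ) (ζ j) * ((z : ℝ) : ℂ)) * u j a) →
      D.PosDef) := by
  obtain rfl : D = gramMatrix ζ u := Matrix.ext hD
  refine ⟨fun y _ => ?_, gramMatrix_posDef u him⟩
  rw [← integral_herm_expSum_self y u him]
  simp_rw [herm_self]
  rfl

theorem stmt2 {m n : ℕ} (ζ : Fin n → ℂ) (hinj : Function.Injective ζ)
    (him : ∀ j, 0 < (ζ j).im)
    (u : Fin n → Fin m → ℂ) (hu : ∀ j, u j ≠ 0)
    (D : Matrix (Fin n) (Fin n) ℂ)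
    (hD : ∀ j k, D j k = Complex.I / (ζ k - (starRingEnd ℂ) (ζ j)) * herm (u j) (u k)) :
    (∀ y : Fin n → ℂ, y ≠ 0 →
      (∑ j, ∑ k, D j k * y j * (starRingEnd ℂ) (y k)) =
        ((∫ z in Set.Ioi (0:ℝ), ∑ a,
            (‖(∑ j, Complex.exp (-Complex.I * (starRingEnd ℂ) (ζ j) * (z:ℂ)) *
              y j * u j a)‖)^2) : ℂ)) ∧
    (LinearIndependent ℂ (fun j => fun z : Set.Ioi (0:ℝ) => fun a : Fin m =>
        Complex.exp (-Complex.I * (starRingEnd ℂ) (ζ j) * ((z : ℝ) : ℂ)) * u j a) →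
      D.PosDef) :=
  stmt2_general ζ him u D hD
end
end

section
/- Let ζ₁,…,ζₙ be distinct complex numbers with positive imaginary parts, and set c_{jk} = i/(ζ_k - ζ_j*). Then the n×n determinant obtained from [c_{i_b i_a}]_{a,b=1}^n (entry in row a, column b equal to c_{i_b i_a}) by replacing its last row with a row of all 1's equals ∏_{l=1}^{n-1} ((ζ_{i_l}* - ζ_{i_n}*)/(ζ_{i_l} - ζ_{i_n}*)) times the (n-1)×(n-1) determinant det[c_{i_b i_a}]_{a,b=1}^{n-1}. -/
open Complex Matrix BigOperators

noncomputable section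

/-!
Subtracting the last column from the others turns the row of 1's into `(0, …, 0, 1)`, so the
determinant drops to the leading `(n-1) × (n-1)` block. By partial fractions,
`c/(x_a - y_b) - c/(x_a - y_n) = (y_b - y_n)/(x_a - y_n) · c/(x_a - y_b)`, so that block is the
Cauchy-type matrix with row `a` scaled by `(x_a - y_n)⁻¹` and column `b` by `y_b - y_n`.
Positivity of the imaginary parts keeps every `ζ_a - ζ_b*` away from zero.
-/

namespace Matrix

variable {n : ℕ}

theorem det_eq_det_submatrix_castSucc_of_lastRow_eq_single {R : Type*} [CommRing R]
    (A : Matrix (Fin (n + 1)) (Fin (n + 1)) R)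
    (hA : A (Fin.last n) = Pi.single (Fin.last n) 1) :
    A.det = (A.submatrix Fin.castSucc Fin.castSucc).det := by
  rw [det_succ_row A (Fin.last n), Finset.sum_eq_single (Fin.last n)]
  · simp [hA, ← two_mul, pow_mul]
  · intro j _ hj
    simp [hA, hj]
  · simp

theorem det_eq_det_sub_lastCol_of_lastRow_eq_one {R : Type*} [CommRing R]
    (A : Matrix (Fin (n + 1)) (Fin (n + 1)) R) (hA : ∀ j, A (Fin.last n) j = 1) :
    A.det = (of fun a b : Fin n => A a.castSucc b.castSucc - A a.castSucc (Fin.last n)).det := by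
  set B : Matrix (Fin (n + 1)) (Fin (n + 1)) R :=
    of fun i j => if j = Fin.last n then A i j else A i j - A i (Fin.last n)
  have hBA : B.det = A.det := by
    rw [← det_transpose, ← det_transpose A]
    refine det_eq_of_forall_row_eq_smul_add_const (fun j => if j = Fin.last n then 0 else -1)
      (Fin.last n) (by simp) fun j i => ?_
    by_cases hj : j = Fin.last n <;> simp [B, hj, sub_eq_add_neg]
  rw [← hBA, det_eq_det_submatrix_castSucc_of_lastRow_eq_single B]
  · congr 1
    ext a b
    simp [B, Fin.castSucc_ne_last]
  · ext j
    by_cases hj : j = Fin.last n <;> simp [B, hA, hj]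

theorem det_cauchy_of_lastRow_eq_one {K : Type*} [Field K] (c : K) (x y : Fin (n + 1) → K)
    (hxy : ∀ a b, x a - y b ≠ 0) :
    det (of fun a b => if a = Fin.last n then 1 else c / (x a - y b)) =
      (∏ l : Fin n, (y l.castSucc - y (Fin.last n)) / (x l.castSucc - y (Fin.last n))) *
        det (of fun a b : Fin n => c / (x a.castSucc - y b.castSucc)) := by
  have hsub : ∀ a b : Fin n,
      c / (x a.castSucc - y b.castSucc) - c / (x a.castSucc - y (Fin.last n)) =
        (x a.castSucc - y (Fin.last n))⁻¹ *
          ((y b.castSucc - y (Fin.last n)) * (c / (x a.castSucc - y b.castSucc))) := by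
    intro a b
    have := hxy a.castSucc b.castSucc
    have := hxy a.castSucc (Fin.last n)
    field_simp
    ring
  rw [det_eq_det_sub_lastCol_of_lastRow_eq_one _ (by simp)]
  simp only [of_apply, Fin.castSucc_ne_last, if_false, hsub]
  set C : Matrix (Fin n) (Fin n) K := of fun a b => c / (x a.castSucc - y b.castSucc)
  calc _ = (∏ l : Fin n, (x l.castSucc - y (Fin.last n))⁻¹) *
        det (of fun a b => (y b.castSucc - y (Fin.last n)) * C a b) := det_mul_column _ _
    _ = (∏ l : Fin n, (x l.castSucc - y (Fin.last n))⁻¹) *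
        ((∏ l : Fin n, (y l.castSucc - y (Fin.last n))) * C.det) := by
      congr 1
      exact det_mul_row _ _
    _ = _ := by
      rw [← mul_assoc, ← Finset.prod_mul_distrib]
      simp only [div_eq_inv_mul, mul_comm]

end Matrix

theorem Complex.sub_conj_ne_zero_of_im_pos {z w : ℂ} (hz : 0 < z.im) (hw : 0 < w.im) :
    z - (starRingEnd ℂ) w ≠ 0 := by
  intro h
  have := congrArg Complex.im h
  simp only [sub_im, conj_im, sub_neg_eq_add, zero_im] at this
  linarith

theorem stmt4_general {n : ℕ} (ζ : Fin (n+1) → ℂ)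
    (him : ∀ j, 0 < (ζ j).im) :
    -- matrix with (a,b) entry c_{i_b i_a} = i/(ζ_{i_a} - ζ_{i_b}*), last row replaced by 1's
    Matrix.det (fun a b : Fin (n+1) =>
        if a = Fin.last n then 1 else Complex.I / (ζ a - (starRingEnd ℂ) (ζ b)))
      = (∏ l : Fin n, ((starRingEnd ℂ) (ζ l.castSucc) - (starRingEnd ℂ) (ζ (Fin.last n))) /
          (ζ l.castSucc - (starRingEnd ℂ) (ζ (Fin.last n)))) *
        Matrix.det (fun a b : Fin n =>
          Complex.I / (ζ a.castSucc - (starRingEnd ℂ) (ζ b.castSucc))) :=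
  det_cauchy_of_lastRow_eq_one Complex.I ζ (fun j => starRingEnd ℂ (ζ j))
    fun a b => sub_conj_ne_zero_of_im_pos (him a) (him b)

theorem stmt4 {n : ℕ} (ζ : Fin (n+1) → ℂ) (hinj : Function.Injective ζ)
    (him : ∀ j, 0 < (ζ j).im) :
    -- matrix with (a,b) entry c_{i_b i_a} = i/(ζ_{i_a} - ζ_{i_b}*), last row replaced by 1's
    Matrix.det (fun a b : Fin (n+1) =>
        if a = Fin.last n then 1 else Complex.I / (ζ a - (starRingEnd ℂ) (ζ b)))
      = (∏ l : Fin n, ((starRingEnd ℂ) (ζ l.castSucc) - (starRingEnd ℂ) (ζ (Fin.last n))) /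
          (ζ l.castSucc - (starRingEnd ℂ) (ζ (Fin.last n)))) *
        Matrix.det (fun a b : Fin n =>
          Complex.I / (ζ a.castSucc - (starRingEnd ℂ) (ζ b.castSucc))) :=
  stmt4_general ζ him
end
end

section
/- Let ζ₁,…,ζₙ be distinct complex numbers with positive imaginary parts, and set c_{jk} = i/(ζ_k - ζ_j*). Then det[c_{i_b i_a}]_{a,b=1}^n = (i·∏_{l=1}^{n-1}(ζ_{i_n} - ζ_{i_l}) / ∏_{l=1}^{n}(ζ_{i_n} - ζ_{i_l}*)) times the determinant of the n×n matrix whose (a,b) entry is c_{i_b i_a} for a ≤ n-1 and whose last row is all 1's. -/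
/-!
Subtracting row `p` from every other row of the Cauchy-type matrix `c / (x a - y b)` turns row
`a ≠ p` into `(x p - x a) / (x p - y b)` times itself, while row `p` is `c / (x p - y b)`.
Factoring `1 / (x p - y b)` out of each column, `x p - x a` out of each row `a ≠ p` and `c` out
of row `p` leaves the original matrix with row `p` replaced by ones.
-/

open Complex Matrix BigOperators

noncomputable section

theorem Fin.prod_univ_erase_last {M : Type*} [CommMonoid M] {n : ℕ} (f : Fin (n + 1) → M) :
    ∏ i ∈ Finset.univ.erase (Fin.last n), f i = ∏ i : Fin n, f i.castSucc := by
  rw [Fin.univ_castSuccEmb, Finset.erase_cons, Finset.prod_map]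
  rfl

namespace Matrix

variable {ι K : Type*} [Fintype ι] [DecidableEq ι] [Field K]

def cauchy (c : K) (x y : ι → K) : Matrix ι ι K :=
  of fun a b => c / (x a - y b)

theorem det_cauchy_eq_mul_det_updateRow {c : K} {x y : ι → K} (hxy : ∀ a b, x a - y b ≠ 0)
    (p : ι) :
    (cauchy c x y).det = c * (∏ a ∈ Finset.univ.erase p, (x p - x a)) / (∏ b, (x p - y b)) *
      (updateRow (cauchy c x y) p 1).det := by
  set d : ι → K := fun a => if a = p then c else x p - x a
  have hrows : (cauchy c x y).det =
      (diagonal d * updateRow (cauchy c x y) p 1 * diagonal fun b => (x p - y b)⁻¹).det := by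
    refine det_eq_of_forall_row_eq_smul_add_const (fun a => if a = p then 0 else 1) p
      (if_pos rfl) fun a b => ?_
    by_cases ha : a = p
    · subst ha
      simp [d, cauchy, div_eq_mul_inv]
    · simp only [cauchy, of_apply, mul_diagonal, diagonal_mul, ha, ↓reduceIte, updateRow_apply,
        Pi.one_apply, mul_one, d]
      field_simp [hxy a b, hxy p b]
      ring
  have hd : ∏ a, d a = c * ∏ a ∈ Finset.univ.erase p, (x p - x a) := by
    rw [← Finset.mul_prod_erase _ _ (Finset.mem_univ p)]
    simp only [d, if_pos rfl]
    congr 1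
    exact Finset.prod_congr rfl fun a ha => if_neg (Finset.ne_of_mem_erase ha)
  rw [hrows, det_mul, det_mul, det_diagonal, det_diagonal, hd, Finset.prod_inv_distrib]
  ring

end Matrix

theorem stmt5_general {n : ℕ} (ζ : Fin (n+1) → ℂ)
    (him : ∀ j, 0 < (ζ j).im) :
    -- det[c_{i_b i_a}], (a,b) entry c_{i_b i_a} = i/(ζ_{i_a} - ζ_{i_b}*)
    Matrix.det (fun a b : Fin (n+1) => Complex.I / (ζ a - (starRingEnd ℂ) (ζ b)))
      = Complex.I * (∏ l : Fin n, (ζ (Fin.last n) - ζ l.castSucc)) /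
          (∏ l : Fin (n+1), (ζ (Fin.last n) - (starRingEnd ℂ) (ζ l))) *
        Matrix.det (fun a b : Fin (n+1) =>
          if a = Fin.last n then 1 else Complex.I / (ζ a - (starRingEnd ℂ) (ζ b))) := by
  have hne : ∀ a b, ζ a - (starRingEnd ℂ) (ζ b) ≠ 0 := fun a b h => by
    have := congrArg im h
    simp only [sub_im, conj_im, sub_neg_eq_add, zero_im] at this
    linarith [him a, him b]
  have hlast : (fun a b : Fin (n+1) =>
      if a = Fin.last n then 1 else Complex.I / (ζ a - (starRingEnd ℂ) (ζ b))) =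
      updateRow (cauchy I ζ fun b => (starRingEnd ℂ) (ζ b)) (Fin.last n) 1 := by
    ext a b
    simp [updateRow_apply, cauchy]
  have key := det_cauchy_eq_mul_det_updateRow (c := I) hne (Fin.last n)
  rw [Fin.prod_univ_erase_last] at key
  rw [hlast]
  exact key

theorem stmt5 {n : ℕ} (ζ : Fin (n+1) → ℂ) (hinj : Function.Injective ζ)
    (him : ∀ j, 0 < (ζ j).im) :
    -- det[c_{i_b i_a}], (a,b) entry c_{i_b i_a} = i/(ζ_{i_a} - ζ_{i_b}*)
    Matrix.det (fun a b : Fin (n+1) => Complex.I / (ζ a - (starRingEnd ℂ) (ζ b)))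
      = Complex.I * (∏ l : Fin n, (ζ (Fin.last n) - ζ l.castSucc)) /
          (∏ l : Fin (n+1), (ζ (Fin.last n) - (starRingEnd ℂ) (ζ l))) *
        Matrix.det (fun a b : Fin (n+1) =>
          if a = Fin.last n then 1 else Complex.I / (ζ a - (starRingEnd ℂ) (ζ b))) :=
  stmt5_general ζ him

end
end

section
/- Let u_{i₁},…,u_{i_{n-1}}, u_j, u_k be unit vectors in ℂ^m, let ζ_{i₁},…,ζ_{i_{n-1}}, ζ_j, ζ_k be distinct complex numbers with positive imaginary parts, and set d_{pq} = (i/(ζ_q - ζ_p*))⟨u_p, u_q⟩. Define the vector-valued determinant V_j to be the Laplace expansion along the last column of the n×n array whose first n-1 columns are (d_{p i₁},…,d_{p i_{n-1}}) for p ∈ {i₁,…,i_{n-1}, j} and whose last column is the vector u_p. Define V_k analogously with j replaced by k. Then ⟨V_j, V_k⟩ = ((ζ_k - ζ_j*)/i) · det[d_{i_a i_b}]_{a,b=1}^{n-1} · det D, where D is the n×n matrix with rows indexed by i₁,…,i_{n-1},j, columns indexed by i₁,…,i_{n-1},k, and entries d_{pq}. -/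
open Complex Matrix BigOperators

noncomputable section

lemma herm_conj {m : ℕ} (u v : Fin m → ℂ) :
    (starRingEnd ℂ) (herm u v) = herm v u := by
  simp only [herm, map_sum, _root_.map_mul, RingHomCompTriple.comp_apply, Complex.conj_conj, RingHom.id_apply]
  exact Finset.sum_congr rfl fun a _ => by ring

lemma aux_sum {m N : ℕ} (f g : Fin N → ℂ) (u v : Fin N → Fin m → ℂ) :
    ∑ a : Fin m, (∑ p, f p * u p a) * (∑ q, g q * v q a)
      = ∑ p, ∑ q, f p * g q * ∑ a, u p a * v q a := by
  calc ∑ a : Fin m, (∑ p, f p * u p a) * (∑ q, g q * v q a)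
      = ∑ a : Fin m, ∑ p, ∑ q, f p * g q * (u p a * v q a) := by
        refine Finset.sum_congr rfl fun a _ => ?_
        rw [Finset.sum_mul_sum]
        exact Finset.sum_congr rfl fun p _ =>
          Finset.sum_congr rfl fun q _ => by ring
    _ = ∑ p, ∑ a : Fin m, ∑ q, f p * g q * (u p a * v q a) := Finset.sum_comm
    _ = ∑ p, ∑ q, ∑ a : Fin m, f p * g q * (u p a * v q a) := by
        exact Finset.sum_congr rfl fun p _ => Finset.sum_comm
    _ = ∑ p, ∑ q, f p * g q * ∑ a, u p a * v q a := by
        simp [Finset.mul_sum]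

lemma det_col_expand {N : ℕ} (M : Fin (N+1) → Fin N → ℂ) (x : Fin (N+1) → ℂ) :
    Matrix.det (Matrix.of fun p q : Fin (N+1) =>
        if h : (q : ℕ) < N then M p ⟨q, h⟩ else x p)
      = ∑ p : Fin (N+1), ((-1 : ℂ)^((p : ℕ) + N)
          * Matrix.det (Matrix.of fun a b : Fin N => M (p.succAbove a) b)) * x p := by
  rw [Matrix.det_succ_column _ (Fin.last N)]
  refine Finset.sum_congr rfl fun p _ => ?_
  have h1 : (Matrix.of fun p q : Fin (N+1) =>
      if h : (q : ℕ) < N then M p ⟨q, h⟩ else x p) p (Fin.last N) = x p := by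
    simp [Matrix.of_apply]
  have h2 : ((Matrix.of fun p q : Fin (N+1) =>
      if h : (q : ℕ) < N then M p ⟨q, h⟩ else x p).submatrix p.succAbove
        (Fin.last N).succAbove)
      = Matrix.of fun a b : Fin N => M (p.succAbove a) b := by
    ext a b
    simp [Matrix.submatrix_apply, Matrix.of_apply, Fin.succAbove_last, b.is_lt]
  rw [h1, h2, Fin.val_last]
  ring

lemma det_row_expand {N : ℕ} (M : Fin N → Fin (N+1) → ℂ) (y : Fin (N+1) → ℂ) :
    Matrix.det (Matrix.of fun p q : Fin (N+1) =>
        if h : (p : ℕ) < N then M ⟨p, h⟩ q else y q)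
      = ∑ q : Fin (N+1), ((-1 : ℂ)^((q : ℕ) + N)
          * Matrix.det (Matrix.of fun a b : Fin N => M a (q.succAbove b))) * y q := by
  rw [Matrix.det_succ_row _ (Fin.last N)]
  refine Finset.sum_congr rfl fun q _ => ?_
  have h1 : (Matrix.of fun p q : Fin (N+1) =>
      if h : (p : ℕ) < N then M ⟨p, h⟩ q else y q) (Fin.last N) q = y q := by
    simp [Matrix.of_apply]
  have h2 : ((Matrix.of fun p q : Fin (N+1) =>
      if h : (p : ℕ) < N then M ⟨p, h⟩ q else y q).submatrix (Fin.last N).succAbove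
        q.succAbove)
      = Matrix.of fun a b : Fin N => M a (q.succAbove b) := by
    ext a b
    simp [Matrix.submatrix_apply, Matrix.of_apply, Fin.succAbove_last, a.is_lt]
  rw [h1, h2, Fin.val_last]
  ring

theorem stmt8 {m nn : ℕ}
    (ζi : Fin nn → ℂ) (ui : Fin nn → Fin m → ℂ)
    (ζj ζk : ℂ) (uj uk : Fin m → ℂ)
    (hinj : Function.Injective
      (Fin.snoc (Fin.snoc ζi ζj) ζk : Fin (nn + 1 + 1) → ℂ))
    (him : ∀ l : Fin (nn + 1 + 1),
      0 < ((Fin.snoc (Fin.snoc ζi ζj) ζk : Fin (nn + 1 + 1) → ℂ) l).im)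
    (hui : ∀ b, herm (ui b) (ui b) = 1)
    (huj : herm uj uj = 1) (huk : herm uk uk = 1) :
    -- d (ζ_p, u_p) (ζ_q, u_q) = (i/(ζ_q - ζ_p*)) ⟨u_p, u_q⟩
    let d : (ℂ × (Fin m → ℂ)) → (ℂ × (Fin m → ℂ)) → ℂ :=
      fun p q => Complex.I / (q.1 - (starRingEnd ℂ) p.1) * herm p.2 q.2
    let rowj : Fin (nn + 1) → ℂ × (Fin m → ℂ) := Fin.snoc (fun b => (ζi b, ui b)) (ζj, uj)
    let rowk : Fin (nn + 1) → ℂ × (Fin m → ℂ) := Fin.snoc (fun b => (ζi b, ui b)) (ζk, uk)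
    -- V_j : vector determinant, scalar columns d_{· i_b}, last column the vectors
    let Vj : Fin m → ℂ := fun a =>
      Matrix.det (fun p q : Fin (nn + 1) =>
        if h : (q : ℕ) < nn then d (rowj p) (ζi ⟨q, h⟩, ui ⟨q, h⟩) else (rowj p).2 a)
    let Vk : Fin m → ℂ := fun a =>
      Matrix.det (fun p q : Fin (nn + 1) =>
        if h : (q : ℕ) < nn then d (rowk p) (ζi ⟨q, h⟩, ui ⟨q, h⟩) else (rowk p).2 a)
    herm Vj Vk = (ζk - (starRingEnd ℂ) ζj) / Complex.I *
      Matrix.det (fun a b : Fin nn => d (ζi a, ui a) (ζi b, ui b)) *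
      Matrix.det (fun p q : Fin (nn + 1) => d (rowj p) (rowk q)) := by
  intro d rowj rowk Vj Vk
  have hd : ∀ p q, d p q = Complex.I / (q.1 - (starRingEnd ℂ) p.1) * herm p.2 q.2 :=
    fun _ _ => rfl
  have hrowjc : ∀ b : Fin nn, rowj (Fin.castSucc b) = (ζi b, ui b) :=
    fun b => Fin.snoc_castSucc _ _ b
  have hrowjl : rowj (Fin.last nn) = (ζj, uj) := Fin.snoc_last _ _
  have hrowkc : ∀ b : Fin nn, rowk (Fin.castSucc b) = (ζi b, ui b) :=
    fun b => Fin.snoc_castSucc _ _ b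
  have hrowkl : rowk (Fin.last nn) = (ζk, uk) := Fin.snoc_last _ _
  have hrowp : ∀ (q : Fin (nn+1)) (h : (q : ℕ) < nn), rowj q = (ζi ⟨q, h⟩, ui ⟨q, h⟩) := by
    intro q h
    have hq : Fin.castSucc ⟨(q : ℕ), h⟩ = q := Fin.ext rfl
    exact (congrArg rowj hq).symm.trans (hrowjc ⟨(q : ℕ), h⟩)
  have hrowq : ∀ (q : Fin (nn+1)) (h : (q : ℕ) < nn), rowk q = (ζi ⟨q, h⟩, ui ⟨q, h⟩) := by
    intro q h
    have hq : Fin.castSucc ⟨(q : ℕ), h⟩ = q := Fin.ext rfl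
    exact (congrArg rowk hq).symm.trans (hrowkc ⟨(q : ℕ), h⟩)
  have hlastof : ∀ q : Fin (nn+1), ¬ ((q : ℕ) < nn) → q = Fin.last nn := by
    intro q h
    exact Fin.ext (Nat.le_antisymm (Nat.lt_succ_iff.mp q.isLt) (le_of_not_gt h))
  -- conjugation of d
  have hconjd : ∀ p q, (starRingEnd ℂ) (d p q) = d q p := by
    intro p q
    rw [hd, hd, _root_.map_mul, map_div₀, Complex.conj_I, map_sub, Complex.conj_conj,
      herm_conj]
    have : p.1 - (starRingEnd ℂ) q.1 = -((starRingEnd ℂ) q.1 - p.1) := by ring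
    rw [this, div_neg, neg_div]
  -- positivity of imaginary parts
  have himj : ∀ p : Fin (nn+1), 0 < ((rowj p).1).im := by
    intro p
    refine Fin.lastCases ?_ ?_ p
    · have := him (Fin.castSucc (Fin.last nn))
      simpa [Fin.snoc_castSucc, Fin.snoc_last, hrowjl] using this
    · intro b
      have := him (Fin.castSucc (Fin.castSucc b))
      simpa [Fin.snoc_castSucc, hrowjc] using this
  have himk : ∀ q : Fin (nn+1), 0 < ((rowk q).1).im := by
    intro q
    refine Fin.lastCases ?_ ?_ q
    · have := him (Fin.last (nn+1))
      simpa [Fin.snoc_last, hrowkl] using this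
    · intro b
      have := him (Fin.castSucc (Fin.castSucc b))
      simpa [Fin.snoc_castSucc, hrowkc] using this
  -- inner products in terms of d
  have hhermd : ∀ p q : Fin (nn+1),
      herm (rowj p).2 (rowk q).2 =
        ((rowk q).1 - (starRingEnd ℂ) (rowj p).1) / Complex.I * d (rowj p) (rowk q) := by
    intro p q
    have hz : (rowk q).1 - (starRingEnd ℂ) (rowj p).1 ≠ 0 := by
      intro h0
      have h1 := congrArg Complex.im h0
      simp only [Complex.sub_im, Complex.conj_im, Complex.zero_im] at h1
      have := himj p
      have := himk q
      linarith
    have hcan : ((rowk q).1 - (starRingEnd ℂ) (rowj p).1) / Complex.I *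
        (Complex.I / ((rowk q).1 - (starRingEnd ℂ) (rowj p).1)) = 1 := by
      rw [div_mul_div_comm, mul_comm, div_self (mul_ne_zero Complex.I_ne_zero hz)]
    rw [hd, ← mul_assoc, hcan, one_mul]
  -- cofactors
  obtain ⟨cofJ, hcofJ⟩ : ∃ f : Fin (nn+1) → ℂ, ∀ p, f p =
      (-1 : ℂ)^((p : ℕ) + nn) * Matrix.det
        (Matrix.of fun a b : Fin nn => d (rowj (p.succAbove a)) (ζi b, ui b)) :=
    ⟨_, fun _ => rfl⟩
  obtain ⟨cofK, hcofK⟩ : ∃ f : Fin (nn+1) → ℂ, ∀ q, f q =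
      (-1 : ℂ)^((q : ℕ) + nn) * Matrix.det
        (Matrix.of fun a b : Fin nn => d (ζi a, ui a) (rowk (q.succAbove b))) :=
    ⟨_, fun _ => rfl⟩
  -- expansion of Vj
  have hVjx : ∀ a, Vj a = ∑ p, cofJ p * (rowj p).2 a := by
    intro a
    have h0 : Vj a = Matrix.det (Matrix.of fun p q : Fin (nn+1) =>
        if h : (q : ℕ) < nn then d (rowj p) (ζi ⟨q, h⟩, ui ⟨q, h⟩) else (rowj p).2 a) := rfl
    rw [h0, det_col_expand (fun p b => d (rowj p) (ζi b, ui b))]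
    exact Finset.sum_congr rfl fun p _ => by rw [hcofJ]
  -- conjugate expansion of Vk
  have hVkx : ∀ a, (starRingEnd ℂ) (Vk a) = ∑ q, cofK q * (starRingEnd ℂ) ((rowk q).2 a) := by
    intro a
    have h0 : Vk a = Matrix.det (Matrix.of fun p q : Fin (nn+1) =>
        if h : (q : ℕ) < nn then d (rowk p) (ζi ⟨q, h⟩, ui ⟨q, h⟩) else (rowk p).2 a) := rfl
    rw [h0, RingHom.map_det, RingHom.mapMatrix_apply, ← Matrix.det_transpose]
    have h1 : ((Matrix.of fun p q : Fin (nn+1) =>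
        if h : (q : ℕ) < nn then d (rowk p) (ζi ⟨q, h⟩, ui ⟨q, h⟩) else (rowk p).2 a).map
          (starRingEnd ℂ))ᵀ
        = Matrix.of fun p q : Fin (nn+1) =>
            if h : (p : ℕ) < nn then d (ζi ⟨p, h⟩, ui ⟨p, h⟩) (rowk q)
            else (starRingEnd ℂ) ((rowk q).2 a) := by
      ext p q
      simp only [Matrix.transpose_apply, Matrix.map_apply, Matrix.of_apply]
      rw [apply_dite (starRingEnd ℂ)]
      by_cases h : (p : ℕ) < nn
      · rw [dif_pos h, dif_pos h, hconjd]
      · rw [dif_neg h, dif_neg h]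
    rw [h1, det_row_expand (fun b q => d (ζi b, ui b) (rowk q))]
    exact Finset.sum_congr rfl fun q _ => by rw [hcofK]
  -- main expansion
  have key : herm Vj Vk = ∑ p, ∑ q, cofJ p * cofK q *
      (((rowk q).1 - (starRingEnd ℂ) (rowj p).1) / Complex.I * d (rowj p) (rowk q)) := by
    have h0 : herm Vj Vk = ∑ a, Vj a * (starRingEnd ℂ) (Vk a) := rfl
    rw [h0]
    calc ∑ a, Vj a * (starRingEnd ℂ) (Vk a)
        = ∑ a : Fin m, (∑ p, cofJ p * (rowj p).2 a) *
            (∑ q, cofK q * (starRingEnd ℂ) ((rowk q).2 a)) := by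
          exact Finset.sum_congr rfl fun a _ => by rw [hVjx, hVkx]
      _ = ∑ p, ∑ q, cofJ p * cofK q *
            ∑ a, (rowj p).2 a * (starRingEnd ℂ) ((rowk q).2 a) :=
          aux_sum _ _ _ _
      _ = ∑ p, ∑ q, cofJ p * cofK q *
            (((rowk q).1 - (starRingEnd ℂ) (rowj p).1) / Complex.I *
              d (rowj p) (rowk q)) := by
          refine Finset.sum_congr rfl fun p _ => Finset.sum_congr rfl fun q _ => ?_
          rw [← hhermd p q]; rfl
  -- column sums
  have hcol : ∀ q : Fin (nn+1), (∑ p, cofJ p * d (rowj p) (rowk q))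
      = if q = Fin.last nn
        then Matrix.det (Matrix.of fun p q : Fin (nn+1) => d (rowj p) (rowk q)) else 0 := by
    intro q
    have e : (∑ p, cofJ p * d (rowj p) (rowk q))
        = Matrix.det (Matrix.of fun p q' : Fin (nn+1) =>
            if h : (q' : ℕ) < nn then d (rowj p) (ζi ⟨q', h⟩, ui ⟨q', h⟩)
            else d (rowj p) (rowk q)) := by
      rw [det_col_expand (fun p b => d (rowj p) (ζi b, ui b))]
      exact Finset.sum_congr rfl fun p _ => by rw [hcofJ]
    rw [e]
    by_cases hq : q = Fin.last nn
    · subst hq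
      rw [if_pos rfl]
      congr 1
      ext p q'
      simp only [Matrix.of_apply]
      by_cases h : (q' : ℕ) < nn
      · rw [dif_pos h, hrowq q' h]
      · rw [dif_neg h, hlastof q' h]
    · rw [if_neg hq]
      have hlt : (q : ℕ) < nn :=
        lt_of_le_of_ne (Nat.lt_succ_iff.mp q.isLt) (fun h => hq (Fin.ext h))
      refine Matrix.det_zero_of_column_eq (i := Fin.castSucc ⟨(q : ℕ), hlt⟩)
        (j := Fin.last nn) (Fin.castSucc_lt_last _).ne ?_
      intro p
      simp only [Matrix.of_apply]
      rw [dif_pos (show ((Fin.castSucc ⟨(q : ℕ), hlt⟩ : Fin (nn+1)) : ℕ) < nn from hlt),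
        dif_neg (show ¬ ((Fin.last nn : Fin (nn+1)) : ℕ) < nn by simp), hrowq q hlt]
      rfl
  -- row sums
  have hrow : ∀ p : Fin (nn+1), (∑ q, cofK q * d (rowj p) (rowk q))
      = if p = Fin.last nn
        then Matrix.det (Matrix.of fun p q : Fin (nn+1) => d (rowj p) (rowk q)) else 0 := by
    intro p
    have e : (∑ q, cofK q * d (rowj p) (rowk q))
        = Matrix.det (Matrix.of fun p' q : Fin (nn+1) =>
            if h : (p' : ℕ) < nn then d (ζi ⟨p', h⟩, ui ⟨p', h⟩) (rowk q)
            else d (rowj p) (rowk q)) := by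
      rw [det_row_expand (fun b q => d (ζi b, ui b) (rowk q))]
      exact Finset.sum_congr rfl fun q _ => by rw [hcofK]
    rw [e]
    by_cases hp : p = Fin.last nn
    · subst hp
      rw [if_pos rfl]
      congr 1
      ext p' q
      simp only [Matrix.of_apply]
      by_cases h : (p' : ℕ) < nn
      · rw [dif_pos h, hrowp p' h]
      · rw [dif_neg h, hlastof p' h]
    · rw [if_neg hp]
      have hlt : (p : ℕ) < nn :=
        lt_of_le_of_ne (Nat.lt_succ_iff.mp p.isLt) (fun h => hp (Fin.ext h))
      refine Matrix.det_zero_of_row_eq (i := Fin.castSucc ⟨(p : ℕ), hlt⟩)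
        (j := Fin.last nn) (Fin.castSucc_lt_last _).ne ?_
      funext q
      simp only [Matrix.of_apply]
      rw [dif_pos (show ((Fin.castSucc ⟨(p : ℕ), hlt⟩ : Fin (nn+1)) : ℕ) < nn from hlt),
        dif_neg (show ¬ ((Fin.last nn : Fin (nn+1)) : ℕ) < nn by simp), hrowp p hlt]
      rfl
  -- the two border cofactors
  have hcofJlast : cofJ (Fin.last nn)
      = Matrix.det (Matrix.of fun a b : Fin nn => d (ζi a, ui a) (ζi b, ui b)) := by
    rw [hcofJ, Fin.val_last, Even.neg_one_pow ⟨nn, rfl⟩, one_mul]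
    congr 1
    ext a b
    simp only [Matrix.of_apply, Fin.succAbove_last, hrowjc]
  have hcofKlast : cofK (Fin.last nn)
      = Matrix.det (Matrix.of fun a b : Fin nn => d (ζi a, ui a) (ζi b, ui b)) := by
    rw [hcofK, Fin.val_last, Even.neg_one_pow ⟨nn, rfl⟩, one_mul]
    congr 1
    ext a b
    simp only [Matrix.of_apply, Fin.succAbove_last, hrowkc]
  -- assemble
  set Ddet := Matrix.det (Matrix.of fun p q : Fin (nn+1) => d (rowj p) (rowk q)) with hDdet
  set D0 := Matrix.det (Matrix.of fun a b : Fin nn => d (ζi a, ui a) (ζi b, ui b)) with hD0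
  rw [key]
  have split : ∑ p, ∑ q, cofJ p * cofK q *
      (((rowk q).1 - (starRingEnd ℂ) (rowj p).1) / Complex.I * d (rowj p) (rowk q))
      = (∑ p, ∑ q, (cofK q * (rowk q).1) * (cofJ p * d (rowj p) (rowk q))) / Complex.I
        - (∑ p, ∑ q, (cofJ p * (starRingEnd ℂ) (rowj p).1) *
            (cofK q * d (rowj p) (rowk q))) / Complex.I := by
    calc ∑ p, ∑ q, cofJ p * cofK q *
        (((rowk q).1 - (starRingEnd ℂ) (rowj p).1) / Complex.I * d (rowj p) (rowk q))
        = ∑ p, ∑ q,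
            ((cofK q * (rowk q).1) * (cofJ p * d (rowj p) (rowk q)) / Complex.I
              - (cofJ p * (starRingEnd ℂ) (rowj p).1) *
                  (cofK q * d (rowj p) (rowk q)) / Complex.I) := by
          refine Finset.sum_congr rfl fun p _ => Finset.sum_congr rfl fun q _ => by ring
      _ = _ := by
          simp only [Finset.sum_sub_distrib, ← Finset.sum_div]
  rw [split]
  have t1 : (∑ p, ∑ q, (cofK q * (rowk q).1) * (cofJ p * d (rowj p) (rowk q)))
      = D0 * ζk * Ddet := by
    rw [Finset.sum_comm]
    have : ∀ q : Fin (nn+1), ∑ p, (cofK q * (rowk q).1) * (cofJ p * d (rowj p) (rowk q))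
        = (cofK q * (rowk q).1) * (if q = Fin.last nn then Ddet else 0) := by
      intro q
      rw [← Finset.mul_sum, hcol q]
    rw [Finset.sum_congr rfl fun q _ => this q]
    rw [Finset.sum_eq_single (Fin.last nn)]
    · rw [if_pos rfl, hcofKlast, hrowkl]
    · intro b _ hb
      rw [if_neg hb, mul_zero]
    · intro h; exact absurd (Finset.mem_univ _) h
  have t2 : (∑ p, ∑ q, (cofJ p * (starRingEnd ℂ) (rowj p).1) *
      (cofK q * d (rowj p) (rowk q))) = D0 * (starRingEnd ℂ) ζj * Ddet := by
    have : ∀ p : Fin (nn+1), (∑ q, (cofJ p * (starRingEnd ℂ) (rowj p).1) *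
        (cofK q * d (rowj p) (rowk q)))
        = (cofJ p * (starRingEnd ℂ) (rowj p).1) * (if p = Fin.last nn then Ddet else 0) := by
      intro p
      rw [← Finset.mul_sum, hrow p]
    rw [Finset.sum_congr rfl fun p _ => this p]
    rw [Finset.sum_eq_single (Fin.last nn)]
    · rw [if_pos rfl, hcofJlast, hrowjl]
    · intro b _ hb
      rw [if_neg hb, mul_zero]
    · intro h; exact absurd (Finset.mem_univ _) h
  rw [t1, t2]
  have hgoal1 : Matrix.det (fun a b : Fin nn => d (ζi a, ui a) (ζi b, ui b)) = D0 := rfl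
  have hgoal2 : Matrix.det (fun p q : Fin (nn+1) => d (rowj p) (rowk q)) = Ddet := rfl
  rw [hgoal1, hgoal2]
  ring

end
end

section
/- Let u_{i₁},…,u_{iₙ} be unit vectors in ℂ^m, let ζ_{i₁},…,ζ_{iₙ} be distinct complex numbers with positive imaginary parts, and set d_{pq} = (i/(ζ_q - ζ_p*))⟨u_p, u_q⟩. Assume det[d_{i_a i_b}]_{a,b=1}^{n-1} ≠ 0 and det[d_{i_a i_b}]_{a,b=1}^{n} ≠ 0. Define the polarization vector u_{{i₁,…,i_{n-1}}, iₙ} = e^{φ} · ∏_{l=1}^{n-1}((ζ_{i_l}* - ζ_{iₙ}*)/(ζ_{i_l} - ζ_{iₙ}*)) · V / det[d_{i_a i_b}]_{a,b=1}^{n-1}, where V is the ℂ^m-valued Laplace expansion along the last column of the n×n array with entries d_{i_a i_b} (b ≤ n-1) and last column u_{i_a}, and where e^{-2φ} = ∏_{l=1}^{n-1}|(ζ_{i_l}-ζ_{iₙ})/(ζ_{i_l}-ζ_{iₙ}*)|² · det[d]ₙ / (d_{iₙiₙ}·det[d]_{n-1}) with det[d]ₙ = det[d_{i_a i_b}]_{a,b=1}^n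 and det[d]_{n-1} = det[d_{i_a i_b}]_{a,b=1}^{n-1}. Then ‖u_{{i₁,…,i_{n-1}}, iₙ}‖ = 1. -/
/-!
The matrix `d` is a Cauchy-like matrix: it satisfies the displacement equation
`d · diag ζ - diag ζ̄ · d = i G`, where `G` is the Gram matrix of the `u_p`. The vector `V`
is the last row of `adj d` applied to the `u_p`, so `⟨V, V⟩ = (adj d · G · adj d)ₙₙ`, and
`adj d · d = d · adj d = det d` turns the displacement equation into
`⟨V, V⟩ = det[d]ₙ · det[d]ₙ₋₁ · 2 Im ζₙ`. The normalisation `e^{-2φ}` cancels exactly this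
factor, since the Blaschke-type product has modulus `∏ |ζₗ - ζₙ| / |ζₗ - ζ̄ₙ|` and
`dₙₙ = 1 / (2 Im ζₙ)`.
-/

open Complex Matrix BigOperators

noncomputable section

open ComplexConjugate

lemma herm_eq_dotProduct {m : ℕ} (v w : Fin m → ℂ) : herm v w = v ⬝ᵥ star w := rfl

lemma herm_smul_smul {m : ℕ} (c c' : ℂ) (v w : Fin m → ℂ) :
    herm (c • v) (c' • w) = c * star c' * herm v w := by
  simp only [herm_eq_dotProduct, star_smul, smul_dotProduct, dotProduct_smul, smul_eq_mul]
  ring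

lemma herm_vecMul_vecMul {ι : Type*} [Fintype ι] {m : ℕ} (U : Matrix ι (Fin m) ℂ) (x y : ι → ℂ) :
    herm (x ᵥ* U) (y ᵥ* U) = x ⬝ᵥ (U * Uᴴ) *ᵥ star y := by
  rw [herm_eq_dotProduct, star_vecMul, dotProduct_mulVec, vecMul_vecMul, ← dotProduct_mulVec]

lemma Matrix.mul_mul_apply_eq_dotProduct_mulVec {ι R : Type*} [Fintype ι] [CommSemiring R]
    (A M N : Matrix ι ι R) (j k : ι) : (A * M * N) j k = A j ⬝ᵥ M *ᵥ fun q => N q k := by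
  rw [mul_apply', dotProduct_mulVec]
  rfl

lemma Matrix.adjugate_mul_displacement_mul_adjugate {ι R : Type*} [Fintype ι] [DecidableEq ι]
    [CommRing R] (A : Matrix ι ι R) (α β : ι → R) :
    A.adjugate * (A * diagonal α - diagonal β * A) * A.adjugate
      = A.det • (diagonal α * A.adjugate - A.adjugate * diagonal β) := by
  simp only [Matrix.mul_sub, Matrix.sub_mul, ← Matrix.mul_assoc, adjugate_mul]
  simp only [Matrix.mul_assoc, mul_adjugate, smul_mul, one_mul, Matrix.mul_smul, Matrix.mul_one,
    smul_sub]

lemma Matrix.dite_castSucc_eq_updateCol_last {α : Type*} {k n : ℕ}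
    (A : Matrix (Fin k) (Fin (n+1)) α) (b : Fin k → α) :
    ((fun p (q : Fin (n+1)) => if h : (q : ℕ) < n then A p (Fin.castSucc ⟨q, h⟩) else b p) :
      Matrix (Fin k) (Fin (n+1)) α) = A.updateCol (Fin.last n) b := by
  ext p q
  induction q using Fin.lastCases with
  | last => simp
  | cast i => simp [Fin.castSucc_ne_last]

lemma Matrix.det_dite_castSucc_eq_adjugate_vecMul {R κ : Type*} [CommRing R] {n : ℕ}
    (A : Matrix (Fin (n+1)) (Fin (n+1)) R) (U : Matrix (Fin (n+1)) κ R) (a : κ) :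
    det ((fun p (q : Fin (n+1)) => if h : (q : ℕ) < n then A p (Fin.castSucc ⟨q, h⟩) else U p a) :
      Matrix (Fin (n+1)) (Fin (n+1)) R) = (A.adjugate (Fin.last n) ᵥ* U) a := by
  rw [dite_castSucc_eq_updateCol_last, ← cramer_apply, cramer_eq_adjugate_mulVec]
  rfl

lemma Matrix.adjugate_last_last {R : Type*} [CommRing R] {n : ℕ}
    (A : Matrix (Fin (n+1)) (Fin (n+1)) R) :
    A.adjugate (Fin.last n) (Fin.last n) = (A.submatrix Fin.castSucc Fin.castSucc).det := by
  rw [adjugate_fin_succ_eq_det_submatrix, Fin.succAbove_last, Fin.val_last,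
    Even.neg_one_pow ⟨n, rfl⟩, one_mul]

lemma sub_conj_ne_zero {z w : ℂ} (hz : 0 < z.im) (hw : 0 < w.im) : z - conj w ≠ 0 := by
  intro h
  have := congrArg im h
  simp only [sub_im, conj_im, sub_neg_eq_add, zero_im] at this
  linarith

lemma ofReal_inv_sqrt_mul_conj {r : ℝ} (hr : 0 ≤ r) :
    (((√r)⁻¹ : ℝ) : ℂ) * conj (((√r)⁻¹ : ℝ) : ℂ) = (r : ℂ)⁻¹ := by
  rw [conj_ofReal, ← ofReal_mul, ← mul_inv, Real.mul_self_sqrt hr, ofReal_inv]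

lemma prod_conj_sub_div_mul_conj {ι : Type*} [Fintype ι] (a : ι → ℂ) (b : ℂ) :
    (∏ l, (conj (a l) - conj b) / (a l - conj b))
        * conj (∏ l, (conj (a l) - conj b) / (a l - conj b))
      = ((∏ l, ‖(a l - b) / (a l - conj b)‖ ^ 2 : ℝ) : ℂ) := by
  rw [mul_conj', norm_prod, ← ofReal_pow, ← Finset.prod_pow]
  simp only [← map_sub, norm_div, norm_conj]

lemma isHermitian_of_cauchy {ι : Type*} {m : ℕ} {ζ : ι → ℂ} {u : ι → Fin m → ℂ}
    {A : Matrix ι ι ℂ} (hA : ∀ p q, A p q = I / (ζ q - conj (ζ p)) * herm (u p) (u q)) :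
    A.IsHermitian := by
  refine IsHermitian.ext_iff.2 fun p q => ?_
  have hconj : star (herm (u q) (u p)) = herm (u p) (u q) := by
    simp only [herm, star_sum, star_mul', Complex.star_def, conj_conj, mul_comm]
  rw [hA, hA, star_mul', hconj, star_div₀, Complex.star_def, conj_I, map_sub,
    conj_conj, ← neg_sub, div_neg, neg_div, neg_neg]

lemma displacement_of_cauchy {ι : Type*} [Fintype ι] [DecidableEq ι] {m : ℕ} {ζ : ι → ℂ}
    {u : ι → Fin m → ℂ} {A : Matrix ι ι ℂ} (him : ∀ p, 0 < (ζ p).im)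
    (hA : ∀ p q, A p q = I / (ζ q - conj (ζ p)) * herm (u p) (u q)) :
    I • (of u * (of u)ᴴ) = A * diagonal ζ - diagonal (star ζ) * A := by
  ext p q
  have hne := sub_conj_ne_zero (him q) (him p)
  simp only [Matrix.smul_apply, Matrix.sub_apply, mul_diagonal, diagonal_mul, hA, smul_eq_mul,
    Pi.star_apply, Complex.star_def]
  change I * herm (u p) (u q) = _
  field_simp

theorem herm_adjugate_vecMul_mul_I {ι : Type*} [Fintype ι] [DecidableEq ι] {m : ℕ}
    (A : Matrix ι ι ℂ) (hA : A.IsHermitian) (U : Matrix ι (Fin m) ℂ) (ζ : ι → ℂ)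
    (hdisp : I • (U * Uᴴ) = A * diagonal ζ - diagonal (star ζ) * A) (j k : ι) :
    herm (A.adjugate j ᵥ* U) (A.adjugate k ᵥ* U) * I
      = A.det * A.adjugate j k * (ζ j - star (ζ k)) := by
  have hstar : star (A.adjugate k) = fun q => A.adjugate q k := funext fun q => hA.adjugate.apply q k
  have := congrFun (congrFun (A.adjugate_mul_displacement_mul_adjugate ζ (star ζ)) j) k
  rw [← hdisp, Matrix.mul_smul, Matrix.smul_mul, Matrix.smul_apply,
    mul_mul_apply_eq_dotProduct_mulVec] at this
  rw [herm_vecMul_vecMul, hstar, mul_comm, ← smul_eq_mul, this]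
  simp only [Matrix.smul_apply, Matrix.sub_apply, diagonal_mul, mul_diagonal, smul_eq_mul,
    Pi.star_apply]
  ring

theorem stmt9_general {m n : ℕ} (ζ : Fin (n+1) → ℂ)
    (him : ∀ j, 0 < (ζ j).im)
    (u : Fin (n+1) → Fin m → ℂ) (hu : ∀ j, herm (u j) (u j) = 1)
    (d : Fin (n+1) → Fin (n+1) → ℂ)
    (hd : ∀ p q, d p q = Complex.I / (ζ q - (starRingEnd ℂ) (ζ p)) * herm (u p) (u q))
    (Dn1 Dn : ℂ)
    (hDn1 : Dn1 = Matrix.det (fun a b : Fin n => d a.castSucc b.castSucc))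
    (hDn : Dn = Matrix.det (fun a b : Fin (n+1) => d a b))
    (hDn1ne : Dn1 ≠ 0)
    -- r = e^{-2φ}, assumed to be the indicated positive real number
    (r : ℝ) (hr : 0 < r)
    (hre : (r : ℂ) = ((∏ l : Fin n,
        (‖(ζ l.castSucc - ζ (Fin.last n)) /
          (ζ l.castSucc - (starRingEnd ℂ) (ζ (Fin.last n)))‖)^2 : ℝ) : ℂ) *
        Dn / (d (Fin.last n) (Fin.last n) * Dn1)) :
    -- V : vector determinant with scalar columns d_{· i_b}, b ≤ n-1, and vector last column
    let V : Fin m → ℂ := fun a =>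
      Matrix.det (fun p q : Fin (n+1) =>
        if h : (q : ℕ) < n then d p (Fin.castSucc ⟨q, h⟩) else u p a)
    let upol : Fin m → ℂ := fun a =>
      (((Real.sqrt r)⁻¹ : ℝ) : ℂ) *
        (∏ l : Fin n, ((starRingEnd ℂ) (ζ l.castSucc) - (starRingEnd ℂ) (ζ (Fin.last n))) /
          (ζ l.castSucc - (starRingEnd ℂ) (ζ (Fin.last n)))) * V a / Dn1
    herm upol upol = 1 := by
  intro V upol
  set L := Fin.last n
  set w := ζ L - conj (ζ L)
  set c : ℂ := (((√r)⁻¹ : ℝ) : ℂ)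
  set P := ∏ l : Fin n, (conj (ζ l.castSucc) - conj (ζ L)) / (ζ l.castSucc - conj (ζ L))
  set Q := ∏ l : Fin n, ‖(ζ l.castSucc - ζ L) / (ζ l.castSucc - conj (ζ L))‖ ^ 2
  have hA : (of d).IsHermitian := isHermitian_of_cauchy hd
  have hDn1_adj : Dn1 = (of d).adjugate L L := by rw [hDn1, adjugate_last_last]; rfl
  have hVV : herm V V * I = Dn * Dn1 * w := by
    have hV : V = (of d).adjugate L ᵥ* of u :=
      funext fun a => det_dite_castSucc_eq_adjugate_vecMul (of d) (of u) a
    rw [hV, herm_adjugate_vecMul_mul_I _ hA _ ζ (displacement_of_cauchy him hd), hDn1_adj, hDn]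
    rfl
  have hDn1_real : conj Dn1 = Dn1 := by rw [hDn1_adj]; exact hA.adjugate.apply L L
  have hdLL : d L L * w = I := by
    rw [hd, hu, mul_one, div_mul_cancel₀ _ (sub_conj_ne_zero (him L) (him L))]
  have hrQ : Q * Dn * w = r * I * Dn1 := by
    have hdLL_ne : d L L ≠ 0 := left_ne_zero_of_mul (hdLL ▸ I_ne_zero)
    rw [hre, ← hdLL]
    field_simp
  have hupol : upol = (c * P / Dn1) • V := by
    funext a
    simp only [upol, Pi.smul_apply, smul_eq_mul]
    ring
  have hr0 : (r : ℂ) ≠ 0 := ofReal_ne_zero.2 hr.ne'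
  rw [hupol, herm_smul_smul, Complex.star_def, map_div₀, map_mul, hDn1_real,
    eq_div_of_mul_eq I_ne_zero hVV]
  calc _ = c * conj c * (P * conj P) * (Dn * w / (Dn1 * I)) := by field_simp
    _ = 1 := by
      rw [ofReal_inv_sqrt_mul_conj hr.le, prod_conj_sub_div_mul_conj]
      field_simp
      linear_combination hrQ

theorem stmt9 {m n : ℕ} (ζ : Fin (n+1) → ℂ) (hinj : Function.Injective ζ)
    (him : ∀ j, 0 < (ζ j).im)
    (u : Fin (n+1) → Fin m → ℂ) (hu : ∀ j, herm (u j) (u j) = 1)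
    (d : Fin (n+1) → Fin (n+1) → ℂ)
    (hd : ∀ p q, d p q = Complex.I / (ζ q - (starRingEnd ℂ) (ζ p)) * herm (u p) (u q))
    (Dn1 Dn : ℂ)
    (hDn1 : Dn1 = Matrix.det (fun a b : Fin n => d a.castSucc b.castSucc))
    (hDn : Dn = Matrix.det (fun a b : Fin (n+1) => d a b))
    (hDn1ne : Dn1 ≠ 0) (hDnne : Dn ≠ 0)
    -- r = e^{-2φ}, assumed to be the indicated positive real number
    (r : ℝ) (hr : 0 < r)
    (hre : (r : ℂ) = ((∏ l : Fin n,
        (‖(ζ l.castSucc - ζ (Fin.last n)) /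
          (ζ l.castSucc - (starRingEnd ℂ) (ζ (Fin.last n)))‖)^2 : ℝ) : ℂ) *
        Dn / (d (Fin.last n) (Fin.last n) * Dn1)) :
    -- V : vector determinant with scalar columns d_{· i_b}, b ≤ n-1, and vector last column
    let V : Fin m → ℂ := fun a =>
      Matrix.det (fun p q : Fin (n+1) =>
        if h : (q : ℕ) < n then d p (Fin.castSucc ⟨q, h⟩) else u p a)
    let upol : Fin m → ℂ := fun a =>
      (((Real.sqrt r)⁻¹ : ℝ) : ℂ) *
        (∏ l : Fin n, ((starRingEnd ℂ) (ζ l.castSucc) - (starRingEnd ℂ) (ζ (Fin.last n))) /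
          (ζ l.castSucc - (starRingEnd ℂ) (ζ (Fin.last n)))) * V a / Dn1
    herm upol upol = 1 :=
  stmt9_general ζ him u hu d hd Dn1 Dn hDn1 hDn hDn1ne r hr hre
end
end

section
/- Let ζ₁, ζ₂ be complex with positive imaginary parts, ζ₁ ≠ ζ₂, and let u₁, u₂ ∈ ℂ^m be unit vectors. Define e^{-2φ₁₂} = |（ζ₁-ζ₂)/(ζ₁-ζ₂*)|²·(1 + ((ζ₁-ζ₁*)(ζ₂-ζ₂*)/|ζ₁-ζ₂*|²)|⟨u₂,u₁⟩|²) and u_{{1},2} = e^{φ₁₂}·((ζ₁*-ζ₂*)/(ζ₁-ζ₂*))·(u₂ - ((ζ₁-ζ₁*)/(ζ₁-ζ₂*))·⟨u₂,u₁⟩·u₁). Then ‖u_{{1},2}‖ = 1. -/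
/-!
Put `c = (ζ₁ - ζ₁*) / (ζ₁ - ζ₂*)` and `q = |(ζ₁ - ζ₂) / (ζ₁ - ζ₂*)|²`. Then
`1 - c = (ζ₁ - ζ₂)* / (ζ₁ - ζ₂*)` has squared modulus `q`, and for unit vectors
`‖u₂ - c ⟨u₂,u₁⟩ u₁‖² = 1 + (|1 - c|² - 1) |⟨u₂,u₁⟩|²`. The identity
`|ζ₁ - ζ₂*|² - |ζ₁ - ζ₂|² = -(ζ₁ - ζ₁*)(ζ₂ - ζ₂*)` turns `e^{-2φ₁₂}` into
`q (1 + (q - 1) |⟨u₂,u₁⟩|²)`, so `‖u_{{1},2}‖² = e^{2φ₁₂} · q · (1 + (q - 1) |⟨u₂,u₁⟩|²) = 1`.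
Cauchy–Schwarz, `|⟨u₂,u₁⟩| ≤ 1`, makes `e^{-2φ₁₂}` positive.
-/

open Complex Matrix BigOperators

noncomputable section

open ComplexConjugate

theorem norm_sub_smul_inner_smul_sq {𝕜 E : Type*} [RCLike 𝕜] [NormedAddCommGroup E]
    [InnerProductSpace 𝕜 E] {x : E} (hx : ‖x‖ = 1) (y : E) (c : 𝕜) :
    ‖y - (c * inner 𝕜 x y) • x‖ ^ 2 = ‖y‖ ^ 2 + (‖1 - c‖ ^ 2 - 1) * ‖inner 𝕜 x y‖ ^ 2 := by
  have hc : ‖1 - c‖ ^ 2 = 1 - 2 * RCLike.re c + ‖c‖ ^ 2 := by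
    simpa using @norm_sub_sq 𝕜 𝕜 _ _ _ 1 c
  rw [@norm_sub_sq 𝕜, inner_smul_right, ← inner_conj_symm y x, norm_smul, norm_mul, hx, hc,
    mul_assoc, RCLike.mul_conj, ← RCLike.ofReal_pow, RCLike.re_mul_ofReal]
  ring

theorem one_add_sub_one_mul_pos {q t : ℝ} (hq : 0 < q) (ht₀ : 0 ≤ t) (ht₁ : t ≤ 1) :
    0 < 1 + (q - 1) * t := by
  rcases le_total q 1 with hq1 | hq1
  · nlinarith [mul_nonneg (sub_nonneg.2 hq1) (sub_nonneg.2 ht₁)]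
  · nlinarith [mul_nonneg (sub_nonneg.2 hq1) ht₀]

namespace Complex

theorem normSq_sub_conj_sub_normSq_sub (z w : ℂ) :
    normSq (z - conj w) - normSq (z - w) = -((z - conj z) * (w - conj w)).re := by
  simp only [normSq_apply, sub_re, sub_im, mul_re, conj_re, conj_im]
  ring

theorem sub_conj_ne_zero_of_im_pos_s10 {z w : ℂ} (hz : 0 < z.im) (hw : 0 < w.im) :
    z - conj w ≠ 0 := by
  intro h
  have := congrArg im h
  simp only [sub_im, conj_im, zero_im] at this
  linarith

theorem re_sub_conj_mul_sub_conj_div {z w : ℂ} (h : z - conj w ≠ 0) :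
    ((z - conj z) * (w - conj w)).re / ‖z - conj w‖ ^ 2 =
      ‖(z - w) / (z - conj w)‖ ^ 2 - 1 := by
  have h' : normSq (z - conj w) ≠ 0 := normSq_eq_zero.not.mpr h
  rw [norm_div, div_pow, Complex.sq_norm, Complex.sq_norm]
  field_simp
  linarith [normSq_sub_conj_sub_normSq_sub z w]

theorem one_sub_sub_conj_div {z w : ℂ} (h : z - conj w ≠ 0) :
    1 - (z - conj z) / (z - conj w) = conj (z - w) / (z - conj w) := by
  rw [map_sub]
  field_simp
  ring

end Complex

theorem herm_eq_inner {m : ℕ} (u v : Fin m → ℂ) :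
    herm u v = inner ℂ (WithLp.toLp 2 v : EuclideanSpace ℂ (Fin m)) (WithLp.toLp 2 u) := by
  simp [herm, PiLp.inner_apply]

theorem herm_self_eq_norm_sq {m : ℕ} (u : Fin m → ℂ) :
    herm u u = ((‖(WithLp.toLp 2 u : EuclideanSpace ℂ (Fin m))‖ ^ 2 : ℝ) : ℂ) := by
  rw [herm_eq_inner, inner_self_eq_norm_sq_to_K]
  norm_cast

theorem norm_toLp_eq_one_of_herm_self {m : ℕ} {u : Fin m → ℂ} (hu : herm u u = 1) :
    ‖(WithLp.toLp 2 u : EuclideanSpace ℂ (Fin m))‖ = 1 := by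
  rwa [herm_self_eq_norm_sq, ofReal_eq_one,
    pow_eq_one_iff_of_nonneg (norm_nonneg _) two_ne_zero] at hu

theorem norm_herm_le_one {m : ℕ} {u v : Fin m → ℂ} (hu : herm u u = 1) (hv : herm v v = 1) :
    ‖herm u v‖ ≤ 1 := by
  simpa [herm_eq_inner, norm_toLp_eq_one_of_herm_self hu, norm_toLp_eq_one_of_herm_self hv]
    using norm_inner_le_norm (𝕜 := ℂ) (WithLp.toLp 2 v : EuclideanSpace ℂ (Fin m))
      (WithLp.toLp 2 u)

theorem stmt10 {m : ℕ} (ζ₁ ζ₂ : ℂ) (h1 : 0 < ζ₁.im) (h2 : 0 < ζ₂.im) (hne : ζ₁ ≠ ζ₂)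
    (u₁ u₂ : Fin m → ℂ) (hu1 : herm u₁ u₁ = 1) (hu2 : herm u₂ u₂ = 1) :
    -- e^{-2φ₁₂}; note (ζ₁-ζ₁*)(ζ₂-ζ₂*) is real, so we take its real part
    let eneg : ℝ := (‖(ζ₁ - ζ₂) / (ζ₁ - (starRingEnd ℂ) ζ₂)‖)^2 *
      (1 + ((ζ₁ - (starRingEnd ℂ) ζ₁) * (ζ₂ - (starRingEnd ℂ) ζ₂)).re /
        (‖ζ₁ - (starRingEnd ℂ) ζ₂‖)^2 * (‖herm u₂ u₁‖)^2)
    let u12 : Fin m → ℂ := fun a =>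
      (((Real.sqrt eneg)⁻¹ : ℝ) : ℂ) *
        (((starRingEnd ℂ) ζ₁ - (starRingEnd ℂ) ζ₂) / (ζ₁ - (starRingEnd ℂ) ζ₂)) *
        (u₂ a - (ζ₁ - (starRingEnd ℂ) ζ₁) / (ζ₁ - (starRingEnd ℂ) ζ₂) *
          herm u₂ u₁ * u₁ a)
    herm u12 u12 = 1 := by
  intro eneg u12
  have hd := sub_conj_ne_zero_of_im_pos_s10 h1 h2
  set s := herm u₂ u₁ with hs
  set q := ‖(ζ₁ - ζ₂) / (ζ₁ - conj ζ₂)‖ ^ 2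
  have hq : 0 < q := pow_pos (norm_pos_iff.mpr (div_ne_zero (sub_ne_zero.mpr hne) hd)) 2
  have heneg : eneg = q * (1 + (q - 1) * ‖s‖ ^ 2) := by
    simp only [eneg, re_sub_conj_mul_sub_conj_div hd]
    rfl
  have hpos : 0 < eneg := heneg ▸ mul_pos hq (one_add_sub_one_mul_pos hq (by positivity)
    (pow_le_one₀ (norm_nonneg s) (norm_herm_le_one hu2 hu1)))
  have hu12 : (WithLp.toLp 2 u12 : EuclideanSpace ℂ (Fin m)) =
      ((((Real.sqrt eneg)⁻¹ : ℝ) : ℂ) * (conj (ζ₁ - ζ₂) / (ζ₁ - conj ζ₂))) •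
        (WithLp.toLp 2 u₂ - ((ζ₁ - conj ζ₁) / (ζ₁ - conj ζ₂) * s) • WithLp.toLp 2 u₁) := by
    ext a
    simp only [u12, map_sub, PiLp.smul_apply, PiLp.sub_apply, smul_eq_mul]
    ring
  have hw : ‖WithLp.toLp 2 u₂ - ((ζ₁ - conj ζ₁) / (ζ₁ - conj ζ₂) * s) •
      (WithLp.toLp 2 u₁ : EuclideanSpace ℂ (Fin m))‖ ^ 2 = 1 + (q - 1) * ‖s‖ ^ 2 := by
    rw [hs, herm_eq_inner, norm_sub_smul_inner_smul_sq (norm_toLp_eq_one_of_herm_self hu1),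
      norm_toLp_eq_one_of_herm_self hu2, one_sub_sub_conj_div hd, norm_div, norm_conj,
      ← norm_div, one_pow]
  rw [herm_self_eq_norm_sq, hu12, ofReal_eq_one, norm_smul, mul_pow, hw, norm_mul, mul_pow,
    norm_div, norm_conj, ← norm_div, norm_real, Real.norm_eq_abs, sq_abs, inv_pow,
    Real.sq_sqrt hpos.le, mul_assoc, ← heneg, inv_mul_cancel₀ hpos.ne']

end
end
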